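/- arXiv:1804.05721 — 5 statements merged into one kernel-verified Lean document; each statement's English description precedes it below -/
import Mathlib

section
/- For q ∈ (0,1) (or more generally q ≠ roots making denominators vanish), k ≥ 1, and distinct complex numbers z₁,…,z_k in generic position, the symmetrization identity ∑_{σ ∈ S_k} ∏_{1 ≤ B < A ≤ k} (z_{σ(A)} − q z_{σ(B)})/(z_{σ(A)} − z_{σ(B)}) = (q;q)_k / (1−q)^k holds, where (q;q)_k = ∏_{i=1}^k (1 − q^i). -/
/-!
Sorting a permutation `σ` of `Fin (k + 1)` by `p = σ 0`, the pairs containing `0` contribute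
`∏_{t ≠ p} (z t - q z p) / (z t - z p)` and the other pairs form the symmetrization over the
remaining `k` points. By induction everything reduces to the identity
`(1 - q) ∑_p ∏_{j ≠ p} (z j - q z p) / (z j - z p) = 1 - q ^ n`.
When no `z j` vanishes, this is Lagrange interpolation at `0` of
`∏_j (z j - q X) - ∏_j (q z j - q X)`, whose leading terms cancel. A node with `z p₀ = 0`
contributes `1` and multiplies every other term by `q`.
-/

open Finset Polynomial

theorem Polynomial.degree_prod_sub_prod_lt {R ι : Type*} [CommRing R] {s : Finset ι}
    {f g : ι → R[X]} (hf : ∀ i ∈ s, (f i).natDegree ≤ 1) (hg : ∀ i ∈ s, (g i).natDegree ≤ 1)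
    (hfg : ∀ i ∈ s, (f i).coeff 1 = (g i).coeff 1) :
    (∏ i ∈ s, f i - ∏ i ∈ s, g i).degree < #s := by
  have hdeg {h : ι → R[X]} (hh : ∀ i ∈ s, (h i).natDegree ≤ 1) : (∏ i ∈ s, h i).natDegree ≤ #s :=
    (natDegree_prod_le s h).trans <| by simpa using sum_le_card_nsmul s _ 1 hh
  rw [degree_lt_iff_coeff_zero]
  intro m hm
  rcases hm.lt_or_eq with hm | rfl
  · rw [coeff_sub, coeff_eq_zero_of_natDegree_lt ((hdeg hf).trans_lt hm),
      coeff_eq_zero_of_natDegree_lt ((hdeg hg).trans_lt hm), sub_zero]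
  · rw [coeff_sub, ← mul_one #s, coeff_prod_of_natDegree_le s f 1 hf,
      coeff_prod_of_natDegree_le s g 1 hg, prod_congr rfl hfg, sub_self]

theorem Fin.prod_univ_erase_eq_prod_swap_succ {M : Type*} [CommMonoid M] {n : ℕ}
    (p : Fin (n + 1)) (g : Fin (n + 1) → M) :
    ∏ t ∈ univ.erase p, g t = ∏ j : Fin n, g (Equiv.swap 0 p j.succ) := by
  have : univ.erase p = (univ.erase 0).map (Equiv.swap 0 p).toEmbedding := by
    rw [map_erase, map_univ_equiv, Equiv.toEmbedding_apply, Equiv.swap_apply_left]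
  rw [this, prod_map, Fin.univ_succ, erase_cons, prod_map]
  rfl

theorem Finset.prod_filter_lt_eq_prod_Ioi {α M : Type*} [CommMonoid M] [Fintype α]
    [LinearOrder α] [LocallyFiniteOrderTop α] (f : α × α → M) :
    ∏ p ∈ univ.filter (fun p : α × α => p.1 < p.2), f p = ∏ i, ∏ j ∈ Ioi i, f (i, j) :=
  prod_finset_product _ _ _ (by simp)

section Field

variable {K : Type*} [Field K]

section Nodes

variable {ι : Type*} [DecidableEq ι]

theorem mul_sum_prod_div_sub_of_ne_zero (q : K) {s : Finset ι} {z : ι → K}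
    (hz : Set.InjOn z s) (h0 : ∀ i ∈ s, z i ≠ 0) :
    (1 - q) * ∑ p ∈ s, ∏ j ∈ s.erase p, (z j - q * z p) / (z j - z p) = 1 - q ^ #s := by
  set G : K[X] := ∏ j ∈ s, (C (z j) - C q * X) - ∏ j ∈ s, (C (q * z j) - C q * X)
  have hG : G.degree < #s :=
    degree_prod_sub_prod_lt (fun _ _ => by compute_degree) (fun _ _ => by compute_degree)
      (fun _ _ => by simp)
  have hG0 : G.eval 0 = (∏ i ∈ s, z i) * (1 - q ^ #s) := by
    simp only [G, eval_sub, eval_prod, eval_C, eval_mul, eval_X, mul_zero, sub_zero,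
      prod_mul_distrib, prod_const]
    ring
  have hGz (p) (hp : p ∈ s) : G.eval (z p) * (Lagrange.basis s z p).eval 0 =
      (∏ i ∈ s, z i) * ((1 - q) * ∏ j ∈ s.erase p, (z j - q * z p) / (z j - z p)) := by
    have hB : ∏ j ∈ s, (q * z j - q * z p) = 0 := prod_eq_zero hp (sub_self _)
    simp only [G, eval_sub, eval_prod, eval_C, eval_mul, eval_X, hB, sub_zero, Lagrange.basis,
      Lagrange.basisDivisor]
    rw [← mul_prod_erase s _ hp, ← mul_prod_erase s z hp]
    have hfactor (j : ι) : (z p - z j)⁻¹ * (0 - z j) = z j * (z j - z p)⁻¹ := by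
      rw [← neg_sub, inv_neg]
      ring
    simp only [hfactor, div_eq_mul_inv, prod_mul_distrib]
    ring
  have hinterp := congrArg (eval 0) (Lagrange.eq_interpolate hz hG)
  rw [Lagrange.interpolate_apply, eval_finsetSum] at hinterp
  simp only [eval_mul, eval_C] at hinterp
  rw [sum_congr rfl hGz, ← mul_sum, hG0] at hinterp
  rw [mul_sum]
  exact (mul_left_cancel₀ (prod_ne_zero_iff.mpr h0) hinterp).symm

theorem sum_prod_div_sub_of_eq_zero (q : K) {s : Finset ι} {z : ι → K} (hz : Set.InjOn z s)
    {p₀ : ι} (hp₀ : p₀ ∈ s) (hz₀ : z p₀ = 0) :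
    ∑ p ∈ s, ∏ j ∈ s.erase p, (z j - q * z p) / (z j - z p) =
      1 + q * ∑ p ∈ s.erase p₀, ∏ j ∈ (s.erase p₀).erase p, (z j - q * z p) / (z j - z p) := by
  have hne {j} (hj : j ∈ s.erase p₀) : z j ≠ 0 := fun h =>
    (mem_erase.mp hj).1 (hz (mem_erase.mp hj).2 hp₀ (h.trans hz₀.symm))
  rw [← add_sum_erase s _ hp₀, mul_sum]
  congr 1
  · refine prod_eq_one fun j hj => ?_
    rw [hz₀, mul_zero, sub_zero, div_self (hne hj)]
  · refine sum_congr rfl fun p hp => ?_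
    rw [erase_right_comm, ← mul_prod_erase _ _ (mem_erase.mpr ⟨(ne_of_mem_erase hp).symm, hp₀⟩),
      hz₀, zero_sub, zero_sub, neg_div_neg_eq, mul_div_cancel_right₀ _ (hne hp)]

theorem mul_sum_prod_div_sub (q : K) {s : Finset ι} {z : ι → K} (hz : Set.InjOn z s) :
    (1 - q) * ∑ p ∈ s, ∏ j ∈ s.erase p, (z j - q * z p) / (z j - z p) = 1 - q ^ #s := by
  by_cases h0 : ∀ i ∈ s, z i ≠ 0
  · exact mul_sum_prod_div_sub_of_ne_zero q hz h0
  push Not at h0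
  obtain ⟨p₀, hp₀, hz₀⟩ := h0
  have hrest := mul_sum_prod_div_sub_of_ne_zero q (hz.mono (s.erase_subset p₀)) fun j hj h =>
    (mem_erase.mp hj).1 (hz (mem_erase.mp hj).2 hp₀ (h.trans hz₀.symm))
  obtain ⟨n, hn⟩ := Nat.exists_eq_succ_of_ne_zero (card_ne_zero_of_mem hp₀)
  rw [sum_prod_div_sub_of_eq_zero q hz hp₀ hz₀, mul_add, mul_left_comm, hrest,
    card_erase_of_mem hp₀, hn, Nat.succ_sub_one, pow_succ]
  ring

end Nodes

def qSymmetrization (q : K) {k : ℕ} (z : Fin k → K) : K :=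
  ∑ σ : Equiv.Perm (Fin k), ∏ a, ∏ b ∈ Ioi a, (z (σ b) - q * z (σ a)) / (z (σ b) - z (σ a))

theorem qSymmetrization_succ (q : K) {k : ℕ} (z : Fin (k + 1) → K) :
    qSymmetrization q z = ∑ p, (∏ t ∈ univ.erase p, (z t - q * z p) / (z t - z p)) *
      qSymmetrization q (fun i => z (Equiv.swap 0 p i.succ)) := by
  rw [qSymmetrization, ← Equiv.Perm.decomposeFin.symm.sum_comp, Fintype.sum_prod_type]
  refine sum_congr rfl fun p _ => ?_
  rw [qSymmetrization, mul_sum]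
  refine sum_congr rfl fun e _ => ?_
  simp only [Fin.prod_univ_succ, Fin.prod_Ioi_zero, Fin.prod_Ioi_succ,
    Equiv.Perm.decomposeFin_symm_apply_zero, Equiv.Perm.decomposeFin_symm_apply_succ]
  rw [Fin.prod_univ_erase_eq_prod_swap_succ]
  congr 1
  exact Fintype.prod_equiv e _ _ fun _ => rfl

theorem one_sub_pow_mul_qSymmetrization (q : K) {k : ℕ} {z : Fin k → K}
    (hz : Function.Injective z) :
    (1 - q) ^ k * qSymmetrization q z = ∏ i ∈ range k, (1 - q ^ (i + 1)) := by
  induction k with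
  | zero => simp [qSymmetrization]
  | succ k ih =>
    have hrest (p : Fin (k + 1)) :
        (1 - q) ^ k * qSymmetrization q (fun i => z (Equiv.swap 0 p i.succ)) =
          ∏ i ∈ range k, (1 - q ^ (i + 1)) :=
      ih (hz.comp ((Equiv.swap 0 p).injective.comp (Fin.succ_injective k)))
    calc (1 - q) ^ (k + 1) * qSymmetrization q z
        = ((1 - q) * ∑ p, ∏ t ∈ univ.erase p, (z t - q * z p) / (z t - z p)) *
            ∏ i ∈ range k, (1 - q ^ (i + 1)) := by
          rw [qSymmetrization_succ, mul_sum, mul_sum, sum_mul]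
          refine sum_congr rfl fun p _ => ?_
          rw [← hrest p]
          ring
      _ = ∏ i ∈ range (k + 1), (1 - q ^ (i + 1)) := by
          rw [mul_sum_prod_div_sub q hz.injOn, card_univ, Fintype.card_fin, prod_range_succ,
            mul_comm]

end Field

theorem stmt7_general (q : ℝ) (hq : q ∈ Set.Ioo (0:ℝ) 1) (k : ℕ)
    (z : Fin k → ℂ) (hz : Function.Injective z) :
    ∑ σ : Equiv.Perm (Fin k),
      ∏ p ∈ Finset.univ.filter (fun p : Fin k × Fin k => p.1 < p.2),
        (z (σ p.2) - (q : ℂ) * z (σ p.1)) / (z (σ p.2) - z (σ p.1))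
    = (∏ i ∈ Finset.range k, (1 - (q : ℂ) ^ (i + 1))) / (1 - (q : ℂ)) ^ k := by
  have hq₁ : (1 - q : ℂ) ≠ 0 := sub_ne_zero.mpr (by exact_mod_cast hq.2.ne')
  simp only [prod_filter_lt_eq_prod_Ioi]
  rw [eq_div_iff (pow_ne_zero k hq₁), mul_comm, ← one_sub_pow_mul_qSymmetrization _ hz,
    qSymmetrization]

theorem stmt7 (q : ℝ) (hq : q ∈ Set.Ioo (0:ℝ) 1) (k : ℕ) (hk : 1 ≤ k)
    (z : Fin k → ℂ) (hz : Function.Injective z) :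
    ∑ σ : Equiv.Perm (Fin k),
      ∏ p ∈ Finset.univ.filter (fun p : Fin k × Fin k => p.1 < p.2),
        (z (σ p.2) - (q : ℂ) * z (σ p.1)) / (z (σ p.2) - z (σ p.1))
    = (∏ i ∈ Finset.range k, (1 - (q : ℂ) ^ (i + 1))) / (1 - (q : ℂ)) ^ k :=
  stmt7_general q hq k z hz
end

section
/- (q-Binomial theorem) For complex numbers a, x, q with |x| < 1 and |q| < 1, one has ∑_{k=0}^∞ ((a;q)_k/(q;q)_k) x^k = (ax;q)_∞ / (x;q)_∞, where (a;q)_k = ∏_{j=0}^{k−1}(1 − a q^j) and (a;q)_∞ = ∏_{j=0}^∞ (1 − a q^j). -/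
/-!
The series `F(y) = ∑ (a;q)_k / (q;q)_k y^k` converges for `‖y‖ < 1` by the ratio test, and the
recursion `(1 - q^(k+1)) c_(k+1) = (1 - a q^k) c_k` of its coefficients is equivalent to the
functional equation `(1 - y) F(y) = (1 - a y) F(q y)`. Iterating it gives
`(x;q)_n F(x) = (ax;q)_n F(q^n x)`; as `n → ∞`, `F(q^n x) → F(0) = 1` by continuity of `F` on a
closed ball, and the partial products converge, so `(x;q)_∞ F(x) = (ax;q)_∞`. The factors of
`(x;q)_∞` are nonzero and `∑ ‖x q^j‖ < ∞`, so `(x;q)_∞ ≠ 0`.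
-/

open Finset Filter Topology

section QBinomial

variable {𝕜 : Type*} [NormedField 𝕜]

/-- `(a; q)_n`. -/
def qPochhammer (a q : 𝕜) (n : ℕ) : 𝕜 := ∏ j ∈ range n, (1 - a * q ^ j)

def qBinomialCoeff (a q : 𝕜) (k : ℕ) : 𝕜 := qPochhammer a q k / qPochhammer q q k

noncomputable def qBinomialSeries (a q y : 𝕜) : 𝕜 := ∑' k, qBinomialCoeff a q k * y ^ k

lemma one_sub_ne_zero_of_norm_lt_one {z : 𝕜} (hz : ‖z‖ < 1) : 1 - z ≠ 0 := by
  rintro h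
  rw [← sub_eq_zero.1 h, norm_one] at hz
  exact hz.false

lemma norm_pow_mul_le {q : 𝕜} (hq : ‖q‖ ≤ 1) (n : ℕ) (x : 𝕜) : ‖q ^ n * x‖ ≤ ‖x‖ := by
  rw [norm_mul, norm_pow]
  exact mul_le_of_le_one_left (norm_nonneg x) (pow_le_one₀ (norm_nonneg q) hq)

lemma qPochhammer_succ (a q : 𝕜) (n : ℕ) :
    qPochhammer a q (n + 1) = qPochhammer a q n * (1 - a * q ^ n) :=
  prod_range_succ _ n

lemma qBinomialCoeff_zero (a q : 𝕜) : qBinomialCoeff a q 0 = 1 := by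
  simp [qBinomialCoeff, qPochhammer]

lemma qBinomialCoeff_succ (a q : 𝕜) (k : ℕ) :
    qBinomialCoeff a q (k + 1) = qBinomialCoeff a q k * ((1 - a * q ^ k) / (1 - q ^ (k + 1))) := by
  rw [qBinomialCoeff, qBinomialCoeff, qPochhammer_succ, qPochhammer_succ, mul_div_mul_comm,
    ← pow_succ']

lemma qBinomialCoeff_succ_mul {q : 𝕜} (a : 𝕜) (hq : ‖q‖ < 1) (k : ℕ) :
    qBinomialCoeff a q (k + 1) * (1 - q ^ (k + 1)) = qBinomialCoeff a q k * (1 - a * q ^ k) := by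
  have hq' : ‖q ^ (k + 1)‖ < 1 := by
    rw [norm_pow]; exact pow_lt_one₀ (norm_nonneg q) hq k.succ_ne_zero
  rw [qBinomialCoeff_succ, mul_assoc, div_mul_cancel₀ _ (one_sub_ne_zero_of_norm_lt_one hq')]

/-- The ratio of consecutive coefficients tends to `1`. -/
lemma summable_norm_qBinomialCoeff_mul_pow {q : 𝕜} (a : 𝕜) (hq : ‖q‖ < 1) {r : ℝ} (hr0 : 0 ≤ r)
    (hr : r < 1) : Summable fun k => ‖qBinomialCoeff a q k‖ * r ^ k := by
  have hpow : Tendsto (fun k => q ^ k) atTop (𝓝 0) := tendsto_pow_atTop_nhds_zero_of_norm_lt_one hq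
  have hratio : Tendsto (fun k => ‖(1 - a * q ^ k) / (1 - q ^ (k + 1))‖ * r) atTop (𝓝 r) := by
    have hnum : Tendsto (fun k => 1 - a * q ^ k) atTop (𝓝 1) := by
      simpa using tendsto_const_nhds.sub (hpow.const_mul a)
    have hden : Tendsto (fun k => 1 - q ^ (k + 1)) atTop (𝓝 1) := by
      simpa using tendsto_const_nhds.sub ((tendsto_add_atTop_iff_nat 1).2 hpow)
    simpa using ((hnum.div hden one_ne_zero).norm).mul_const r
  obtain ⟨l, hrl, hl⟩ := exists_between hr
  refine summable_of_ratio_norm_eventually_le hl ?_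
  filter_upwards [hratio.eventually_le_const hrl] with k hk
  have hck : 0 ≤ ‖qBinomialCoeff a q k‖ * r ^ k := by positivity
  rw [Real.norm_of_nonneg hck, Real.norm_of_nonneg (by positivity), qBinomialCoeff_succ, norm_mul,
    pow_succ r k]
  calc ‖qBinomialCoeff a q k‖ * ‖(1 - a * q ^ k) / (1 - q ^ (k + 1))‖ * (r ^ k * r)
      = (‖(1 - a * q ^ k) / (1 - q ^ (k + 1))‖ * r) * (‖qBinomialCoeff a q k‖ * r ^ k) := by ring
    _ ≤ l * (‖qBinomialCoeff a q k‖ * r ^ k) := mul_le_mul_of_nonneg_right hk hck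

lemma qBinomialSeries_zero (a q : 𝕜) : qBinomialSeries a q 0 = 1 := by
  rw [qBinomialSeries, tsum_eq_single 0 fun k hk => by simp [zero_pow hk], pow_zero, mul_one,
    qBinomialCoeff_zero]

lemma one_sub_mul_mul_tsum_mul_pow {f : ℕ → 𝕜} {y : 𝕜} (b : 𝕜)
    (hf : Summable fun k => f k * y ^ k) :
    (1 - b * y) * ∑' k, f k * y ^ k = f 0 + ∑' k, (f (k + 1) - b * f k) * y ^ (k + 1) := by
  have hshift : Summable fun k => f (k + 1) * y ^ (k + 1) :=
    (summable_nat_add_iff (f := fun k => f k * y ^ k) 1).2 hf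
  have hmul : Summable fun k => b * y * (f k * y ^ k) := hf.mul_left (b * y)
  calc (1 - b * y) * ∑' k, f k * y ^ k
      = (f 0 + ∑' k, f (k + 1) * y ^ (k + 1)) - ∑' k, b * y * (f k * y ^ k) := by
        rw [sub_mul, one_mul, tsum_mul_left, hf.tsum_eq_zero_add, pow_zero, mul_one]
    _ = f 0 + ∑' k, (f (k + 1) * y ^ (k + 1) - b * y * (f k * y ^ k)) := by
        rw [add_sub_assoc, hshift.tsum_sub hmul]
    _ = f 0 + ∑' k, (f (k + 1) - b * f k) * y ^ (k + 1) := by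
        congr 1
        exact tsum_congr fun k => by ring

lemma summable_norm_neg_mul_pow {q : 𝕜} (a : 𝕜) (hq : ‖q‖ < 1) :
    Summable fun j => ‖-(a * q ^ j)‖ := by
  simpa using (summable_geometric_of_lt_one (norm_nonneg q) hq).mul_left ‖a‖

variable [CompleteSpace 𝕜]

lemma summable_qBinomialCoeff_mul_pow {q y : 𝕜} (a : 𝕜) (hq : ‖q‖ < 1) (hy : ‖y‖ < 1) :
    Summable fun k => qBinomialCoeff a q k * y ^ k :=
  .of_norm_bounded (summable_norm_qBinomialCoeff_mul_pow a hq (norm_nonneg y) hy) fun k => by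
    rw [norm_mul, norm_pow]

lemma continuousOn_qBinomialSeries {q : 𝕜} (a : 𝕜) (hq : ‖q‖ < 1) {r : ℝ} (hr : r < 1) :
    ContinuousOn (qBinomialSeries a q) (Metric.closedBall 0 r) := by
  rcases lt_or_ge r 0 with hr0 | hr0
  · simp [Metric.closedBall_eq_empty.2 hr0]
  refine continuousOn_tsum (fun k => by fun_prop)
    (summable_norm_qBinomialCoeff_mul_pow a hq hr0 hr) fun k y hy => ?_
  rw [norm_mul, norm_pow]
  gcongr
  simpa using hy

lemma one_sub_mul_qBinomialSeries {q y : 𝕜} (a : 𝕜) (hq : ‖q‖ < 1) (hy : ‖y‖ < 1) :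
    (1 - y) * qBinomialSeries a q y = (1 - a * y) * qBinomialSeries a q (q * y) := by
  have hqy : ‖q * y‖ < 1 := by simpa using (norm_pow_mul_le hq.le 1 y).trans_lt hy
  have hy' : Summable fun k => (qBinomialCoeff a q k * q ^ k) * y ^ k := by
    simpa [mul_pow, mul_assoc] using summable_qBinomialCoeff_mul_pow a hq hqy
  have hlhs := one_sub_mul_mul_tsum_mul_pow 1 (summable_qBinomialCoeff_mul_pow a hq hy)
  rw [one_mul] at hlhs
  simp_rw [qBinomialSeries, mul_pow, ← mul_assoc]
  rw [hlhs, one_sub_mul_mul_tsum_mul_pow a hy', pow_zero, mul_one]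
  congr 1
  refine tsum_congr fun k => ?_
  linear_combination y ^ (k + 1) * qBinomialCoeff_succ_mul a hq k

lemma qPochhammer_mul_qBinomialSeries {q x : 𝕜} (a : 𝕜) (hq : ‖q‖ < 1) (hx : ‖x‖ < 1) (n : ℕ) :
    qPochhammer x q n * qBinomialSeries a q x =
      qPochhammer (a * x) q n * qBinomialSeries a q (q ^ n * x) := by
  induction n with
  | zero => simp [qPochhammer]
  | succ n ih =>
    have hfun := one_sub_mul_qBinomialSeries a hq ((norm_pow_mul_le hq.le n x).trans_lt hx)
    rw [← mul_assoc q, ← pow_succ'] at hfun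
    rw [qPochhammer_succ, qPochhammer_succ]
    linear_combination (1 - x * q ^ n) * ih + qPochhammer (a * x) q n * hfun

lemma hasProd_one_sub_mul_pow {q : 𝕜} (a : 𝕜) (hq : ‖q‖ < 1) :
    HasProd (fun j => 1 - a * q ^ j) (∏' j, (1 - a * q ^ j)) := by
  simpa [← sub_eq_add_neg] using
    (multipliable_one_add_of_summable (summable_norm_neg_mul_pow a hq)).hasProd

lemma tprod_one_sub_mul_pow_ne_zero {q : 𝕜} (a : 𝕜) (hq : ‖q‖ < 1) (ha : ∀ j, 1 - a * q ^ j ≠ 0) :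
    ∏' j, (1 - a * q ^ j) ≠ 0 := by
  simpa [← sub_eq_add_neg] using
    tprod_one_add_ne_zero_of_summable (by simpa [← sub_eq_add_neg] using ha)
      (summable_norm_neg_mul_pow a hq)

lemma tprod_mul_qBinomialSeries {q x : 𝕜} (a : 𝕜) (hq : ‖q‖ < 1) (hx : ‖x‖ < 1) :
    (∏' j, (1 - x * q ^ j)) * qBinomialSeries a q x = ∏' j, (1 - a * x * q ^ j) := by
  have hshift : Tendsto (fun n => q ^ n * x) atTop (𝓝[Metric.closedBall 0 ‖x‖] 0) := by
    refine tendsto_nhdsWithin_iff.2 ⟨?_, .of_forall fun n => ?_⟩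
    · simpa using (tendsto_pow_atTop_nhds_zero_of_norm_lt_one hq).mul_const x
    · simpa using norm_pow_mul_le hq.le n x
  have hseries : Tendsto (fun n => qBinomialSeries a q (q ^ n * x)) atTop (𝓝 1) := by
    rw [← qBinomialSeries_zero a q]
    exact ((continuousOn_qBinomialSeries a hq hx).continuousWithinAt (by simp)).tendsto.comp hshift
  have hlhs := (hasProd_one_sub_mul_pow x hq).tendsto_prod_nat.mul_const (qBinomialSeries a q x)
  have hrhs := (hasProd_one_sub_mul_pow (a * x) hq).tendsto_prod_nat.mul hseries
  rw [mul_one] at hrhs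
  refine tendsto_nhds_unique hlhs (hrhs.congr fun n => ?_)
  exact (qPochhammer_mul_qBinomialSeries a hq hx n).symm

end QBinomial

theorem stmt8 (a x q : ℂ) (hx : ‖x‖ < 1) (hq : ‖q‖ < 1) :
    ∑' k : ℕ, (∏ j ∈ Finset.range k, (1 - a * q ^ j)) /
        (∏ j ∈ Finset.range k, (1 - q ^ (j + 1))) * x ^ k
      = (∏' j : ℕ, (1 - a * x * q ^ j)) / (∏' j : ℕ, (1 - x * q ^ j)) := by
  have hcoeff (k : ℕ) : (∏ j ∈ range k, (1 - a * q ^ j)) / (∏ j ∈ range k, (1 - q ^ (j + 1))) =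
      qBinomialCoeff a q k := by
    simp only [qBinomialCoeff, qPochhammer, pow_succ']
  have hx_ne : ∏' j, (1 - x * q ^ j) ≠ 0 := tprod_one_sub_mul_pow_ne_zero x hq fun j =>
    one_sub_ne_zero_of_norm_lt_one <| by
      simpa [mul_comm] using (norm_pow_mul_le hq.le j x).trans_lt hx
  simp_rw [hcoeff]
  rw [eq_div_iff hx_ne, mul_comm]
  exact tprod_mul_qBinomialSeries a hq hx
end

section
/- For fixed x ∈ ℝ, the q-exponential E_q(x) := (−(1−q)x; q)_∞ = ∏_{j=0}^∞ (1 + (1−q)x q^j) converges pointwise to e^x as q ↑ 1 with q ∈ (0,1). -/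
/-!
Write `E_q(x) = exp (∑ j, log (1 + t_j))` with `t_j = (1 - q) x q ^ j`. Since
`log (1 + t) = t + O(t ^ 2)`, the sum is `∑ t_j + O(∑ t_j ^ 2)`, and both geometric series are
explicit: `∑ t_j = x` exactly, while `∑ t_j ^ 2 = (1 - q) x ^ 2 / (1 + q)` tends to `0` as `q → 1`.
-/

open Filter Topology

namespace Real

lemma abs_log_one_add_sub_self_le {t : ℝ} (ht : -1 < t) :
    |log (1 + t) - t| ≤ t ^ 2 / (1 + t) := by
  have hpos : 0 < 1 + t := by linarith
  have hupper : log (1 + t) ≤ t := by linarith [log_le_sub_one_of_pos hpos]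
  have hlower : t - t ^ 2 / (1 + t) ≤ log (1 + t) := by
    convert one_sub_inv_le_log_of_pos hpos using 1
    field_simp
    ring
  rw [abs_sub_comm, abs_of_nonneg (by linarith)]
  linarith

lemma abs_tsum_log_one_add_sub_le {ι : Type*} {f : ι → ℝ} {s σ : ℝ} (hf : HasSum f s)
    (hf_sq : HasSum (fun i ↦ f i ^ 2) σ) (hf_ge : ∀ i, -(1 / 2) ≤ f i) :
    |∑' i, log (1 + f i) - s| ≤ 2 * σ := by
  have hdiff : HasSum (fun i ↦ log (1 + f i) - f i) (∑' i, log (1 + f i) - s) :=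
    (summable_log_one_add_of_summable hf.summable).hasSum.sub hf
  rw [← hdiff.tsum_eq, ← Real.norm_eq_abs]
  refine tsum_of_norm_bounded (hf_sq.mul_left 2) fun i ↦ ?_
  have hpos : 0 < 1 + f i := by linarith [hf_ge i]
  calc ‖log (1 + f i) - f i‖ ≤ f i ^ 2 / (1 + f i) :=
        abs_log_one_add_sub_self_le (by linarith [hf_ge i])
    _ ≤ 2 * f i ^ 2 := by
        rw [div_le_iff₀ hpos]
        nlinarith [sq_nonneg (f i), hf_ge i]

lemma tprod_one_add_eq_rexp_tsum_log {ι : Type*} {f : ι → ℝ} (hf : Summable f)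
    (hf_gt : ∀ i, -1 < f i) :
    ∏' i, (1 + f i) = rexp (∑' i, log (1 + f i)) :=
  (rexp_tsum_eq_tprod (fun i ↦ by linarith [hf_gt i]) (summable_log_one_add_of_summable hf)).symm

end Real

lemma le_mul_pow_of_nonpos_of_le {c a q : ℝ} (hc : c ≤ 0) (ha : c ≤ a) (hq0 : 0 ≤ q)
    (hq1 : q ≤ 1) (j : ℕ) : c ≤ a * q ^ j := by
  have h0 := pow_nonneg hq0 j
  have h1 := pow_le_one₀ hq0 hq1 (n := j)
  rcases le_total 0 a with ha0 | ha0 <;> nlinarith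

lemma hasSum_one_sub_mul_mul_pow {q : ℝ} (hq : |q| < 1) (x : ℝ) :
    HasSum (fun j : ℕ ↦ (1 - q) * x * q ^ j) x := by
  have hq1 : 1 - q ≠ 0 := by linarith [le_abs_self q]
  have h := (hasSum_geometric_of_abs_lt_one hq).mul_left ((1 - q) * x)
  rwa [show (1 - q) * x * (1 - q)⁻¹ = x by field_simp] at h

lemma hasSum_sq_one_sub_mul_mul_pow {q : ℝ} (hq : |q| < 1) (x : ℝ) :
    HasSum (fun j : ℕ ↦ ((1 - q) * x * q ^ j) ^ 2) ((1 - q) * x ^ 2 / (1 + q)) := by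
  have hq1 : 1 - q ≠ 0 := by linarith [le_abs_self q]
  have hq1' : 1 + q ≠ 0 := by linarith [neg_abs_le q]
  have hq2 : |q ^ 2| < 1 := by rw [abs_pow]; exact pow_lt_one₀ (abs_nonneg q) hq two_ne_zero
  have h := (hasSum_geometric_of_abs_lt_one hq2).mul_left (((1 - q) * x) ^ 2)
  rw [show ((1 - q) * x) ^ 2 * (1 - q ^ 2)⁻¹ = (1 - q) * x ^ 2 / (1 + q) by
    rw [show (1 : ℝ) - q ^ 2 = (1 - q) * (1 + q) by ring]; field_simp] at h
  have hterm : (fun j : ℕ ↦ ((1 - q) * x * q ^ j) ^ 2) =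
      fun j ↦ ((1 - q) * x) ^ 2 * (q ^ 2) ^ j := by
    ext j
    ring
  rwa [hterm]

theorem stmt10 (x : ℝ) :
    Tendsto (fun q : ℝ => ∏' j : ℕ, (1 + (1 - q) * x * q ^ j))
      (nhdsWithin 1 (Set.Ioo (0:ℝ) 1)) (nhds (Real.exp x)) := by
  set l := 𝓝[Set.Ioo (0 : ℝ) 1] 1
  have hcoeff : ∀ᶠ q in l, -(1 / 2) ≤ (1 - q) * x := by
    have : ContinuousAt (fun q : ℝ ↦ (1 - q) * x) 1 := by fun_prop
    exact (this.tendsto.mono_left nhdsWithin_le_nhds).eventually_const_le (by norm_num)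
  have hterms : ∀ᶠ q in l, |q| < 1 ∧ ∀ j : ℕ, -(1 / 2) ≤ (1 - q) * x * q ^ j := by
    filter_upwards [self_mem_nhdsWithin, hcoeff] with q ⟨hq0, hq1⟩ ha
    exact ⟨by rwa [abs_of_pos hq0],
      le_mul_pow_of_nonpos_of_le (by norm_num) ha hq0.le hq1.le⟩
  have hbound : Tendsto (fun q : ℝ ↦ 2 * ((1 - q) * x ^ 2 / (1 + q))) l (𝓝 0) := by
    have : ContinuousAt (fun q : ℝ ↦ 2 * ((1 - q) * x ^ 2 / (1 + q))) 1 := by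
      fun_prop (disch := norm_num)
    simpa using this.tendsto.mono_left nhdsWithin_le_nhds
  have hlog : Tendsto (fun q ↦ ∑' j : ℕ, Real.log (1 + (1 - q) * x * q ^ j)) l (𝓝 x) := by
    rw [tendsto_iff_dist_tendsto_zero]
    refine squeeze_zero' (Eventually.of_forall fun q ↦ dist_nonneg) ?_ hbound
    filter_upwards [hterms] with q ⟨hq, hge⟩
    exact Real.abs_tsum_log_one_add_sub_le (hasSum_one_sub_mul_mul_pow hq x)
      (hasSum_sq_one_sub_mul_mul_pow hq x) hge
  refine ((Real.continuous_exp.tendsto x).comp hlog).congr' ?_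
  filter_upwards [hterms] with q ⟨hq, hge⟩
  exact (Real.tprod_one_add_eq_rexp_tsum_log (hasSum_one_sub_mul_mul_pow hq x).summable
    fun j ↦ by linarith [hge j]).symm
end

section
/- (Laplace's method) Let f, g : [a,b] → ℝ be smooth, suppose f has a unique global maximum at c ∈ (a,b) with f''(c) < 0. Then lim_{n→∞} n^{1/2} e^{−n f(c)} ∫_a^b g(x) e^{n f(x)} dx = g(c) √(−2π / f''(c)). -/
open Real Filter intervalIntegral Set Topology MeasureTheory

lemma iter2_eq (f : ℝ → ℝ) (s : Set ℝ) (hsu : UniqueDiffOn ℝ s) (x : ℝ)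
    (hx : x ∈ interior s) : iteratedDerivWithin 2 f s x = deriv (deriv f) x := by
  have hxs : x ∈ s := interior_subset hx
  have hmem : s ∈ 𝓝 x := mem_interior_iff_mem_nhds.mp hx
  rw [iteratedDerivWithin_succ, derivWithin_of_mem_nhds hmem]
  have heq : iteratedDerivWithin 1 f s =ᶠ[𝓝 x] deriv f := by
    filter_upwards [isOpen_interior.mem_nhds hx] with y hy
    rw [iteratedDerivWithin_one,
      derivWithin_of_mem_nhds (mem_interior_iff_mem_nhds.mp hy)]
  exact heq.deriv_eq

lemma taylor_right (a b c : ℝ) (f : ℝ → ℝ) (hc : c ∈ Ioo a b)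
    (hf : ContDiffOn ℝ (⊤ : ℕ∞) f (Icc a b)) (hd0 : deriv f c = 0)
    (x : ℝ) (hcx : c < x) (hxb : x < b) :
    ∃ ξ ∈ Ioo c x, f x - f c = deriv (deriv f) ξ * (x - c) ^ 2 / 2 := by
  have hca : a < c := hc.1
  have hsub : Icc c x ⊆ Icc a b := Icc_subset_Icc hca.le hxb.le
  have hIoosub : Ioo c x ⊆ Ioo a b := Ioo_subset_Ioo hca.le hxb.le
  have hfIoo : ContDiffOn ℝ (⊤ : ℕ∞) f (Ioo a b) := hf.mono Ioo_subset_Icc_self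
  have hd1 : ContDiffOn ℝ (⊤ : ℕ∞) (deriv f) (Ioo a b) :=
    hfIoo.deriv_of_isOpen isOpen_Ioo (by simp)
  have hu : UniqueDiffOn ℝ (Icc c x) := uniqueDiffOn_Icc hcx
  have h1 : ContDiffOn ℝ (1:ℕ) f (Icc c x) := (hf.of_le (by simp)).mono hsub
  have h2 : DifferentiableOn ℝ (iteratedDerivWithin 1 f (Icc c x)) (Ioo c x) := by
    refine ((hd1.differentiableOn (by simp)).mono hIoosub).congr fun y hy => ?_
    rw [iteratedDerivWithin_one,
      derivWithin_of_mem_nhds (Icc_mem_nhds hy.1 hy.2)]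
  obtain ⟨ξ, hξ, hT⟩ := taylor_mean_remainder_lagrange (n := 1) hcx.ne
    (by rwa [uIcc_of_le hcx.le]) (by rwa [uIcc_of_le hcx.le, uIoo_of_le hcx.le])
  rw [uIoo_of_le hcx.le] at hξ
  rw [uIcc_of_le hcx.le] at hT
  refine ⟨ξ, hξ, ?_⟩
  have hder : iteratedDerivWithin 2 f (Icc c x) ξ = deriv (deriv f) ξ := by
    have := iter2_eq f (Icc c x) hu ξ (by rwa [interior_Icc])
    exact this
  have htay : taylorWithinEval f 1 (Icc c x) c x = f c := by
    have h0 : iteratedDerivWithin 1 f (Icc c x) c = 0 := by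
      rw [iteratedDerivWithin_one,
        ((hf.contDiffAt (Icc_mem_nhds hca hc.2)).differentiableAt
          (by simp)).derivWithin (hu c (left_mem_Icc.mpr hcx.le)), hd0]
    rw [taylorWithinEval_succ]
    simp [taylor_within_zero_eval, h0]
  rw [htay] at hT
  rw [hT, hder]
  norm_num [Nat.factorial]

lemma mirror_deriv (f : ℝ → ℝ) (c y : ℝ) (hf : DifferentiableAt ℝ f (2*c - y)) :
    deriv (fun z => f (2*c - z)) y = -deriv f (2*c - y) := by
  have h1 : HasDerivAt (fun z : ℝ => 2*c - z) (-1) y := by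
    simpa using (hasDerivAt_id y).const_sub (2*c)
  have := (hf.hasDerivAt.comp y h1).deriv
  simpa [Function.comp_def] using this

lemma taylor2 (a b c : ℝ) (f : ℝ → ℝ) (hc : c ∈ Ioo a b)
    (hf : ContDiffOn ℝ (⊤ : ℕ∞) f (Icc a b)) (hd0 : deriv f c = 0)
    (x : ℝ) (hx : x ∈ Ioo a b) :
    ∃ ξ ∈ Ioo a b, |ξ - c| ≤ |x - c| ∧
      f x - f c = deriv (deriv f) ξ * (x - c) ^ 2 / 2 := by
  rcases lt_trichotomy x c with hxc | rfl | hcx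
  · -- mirror case
    set F : ℝ → ℝ := fun z => f (2*c - z) with hF
    have hmap : ∀ z ∈ Icc (2*c - b) (2*c - a), 2*c - z ∈ Icc a b := by
      intro z hz; constructor <;> [linarith [hz.2]; linarith [hz.1]]
    have hFc : ContDiffOn ℝ (⊤ : ℕ∞) F (Icc (2*c - b) (2*c - a)) := by
      refine ContDiffOn.comp hf ?_ hmap
      exact (contDiff_const.sub contDiff_id).contDiffOn
    have hcmem : c ∈ Ioo (2*c - b) (2*c - a) := ⟨by linarith [hc.2], by linarith [hc.1]⟩
    have hsmooth : ∀ y ∈ Ioo a b, DifferentiableAt ℝ f y := fun y hy =>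
      (hf.contDiffAt (Icc_mem_nhds hy.1 hy.2)).differentiableAt (by simp)
    have hFd0 : deriv F c = 0 := by
      have : (2*c - c) = c := by ring
      rw [hF, mirror_deriv f c c (by rw [this]; exact hsmooth c hc), this, hd0, neg_zero]
    obtain ⟨ξ', hξ', hT⟩ := taylor_right (2*c - b) (2*c - a) c F hcmem hFc hFd0
      (2*c - x) (by linarith) (by linarith [hx.1])
    have hξmem : 2*c - ξ' ∈ Ioo a b :=
      ⟨by linarith [hξ'.2, hx.1], by linarith [hξ'.1, hc.2]⟩
    -- compute deriv (deriv F) ξ'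
    have hd1 : ContDiffOn ℝ (⊤ : ℕ∞) (deriv f) (Ioo a b) :=
      (hf.mono Ioo_subset_Icc_self).deriv_of_isOpen isOpen_Ioo (by simp)
    have hdF : deriv (deriv F) ξ' = deriv (deriv f) (2*c - ξ') := by
      have hU : IsOpen ((fun z : ℝ => 2*c - z) ⁻¹' (Ioo a b)) :=
        isOpen_Ioo.preimage (continuous_const.sub continuous_id)
      have hmemU : ξ' ∈ (fun z : ℝ => 2*c - z) ⁻¹' (Ioo a b) := hξmem
      have heq : deriv F =ᶠ[𝓝 ξ'] fun z => -deriv f (2*c - z) := by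
        filter_upwards [hU.mem_nhds hmemU] with y hy
        exact mirror_deriv f c y (hsmooth _ hy)
      rw [heq.deriv_eq, deriv.fun_neg, mirror_deriv (deriv f) c ξ'
        ((hd1.contDiffAt (isOpen_Ioo.mem_nhds hξmem)).differentiableAt (by simp)), neg_neg]
    refine ⟨2*c - ξ', hξmem, ?_, ?_⟩
    · rw [abs_sub_le_iff]; constructor <;>
        [skip; skip] <;> rcases abs_cases (x - c) with ⟨h, _⟩ | ⟨h, _⟩ <;>
        [linarith [hξ'.1, hξ'.2]; linarith [hξ'.1, hξ'.2]; linarith [hξ'.1, hξ'.2];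
         linarith [hξ'.1, hξ'.2]]
    · have hFx : F (2*c - x) = f x := by show f (2*c - (2*c - x)) = f x; norm_num
      have hFcv : F c = f c := by show f (2*c - c) = f c; congr 1; ring
      rw [hFx, hFcv, hdF] at hT
      rw [hT]; ring
  · exact ⟨x, hx, by simp⟩
  · obtain ⟨ξ, hξ, hT⟩ := taylor_right a b c f hc hf hd0 x hcx hx.2
    exact ⟨ξ, ⟨lt_trans hc.1 hξ.1, lt_trans hξ.2 hx.2⟩,
      by rcases abs_cases (x - c) with ⟨h, _⟩ | ⟨h, _⟩ <;>
         rcases abs_cases (ξ - c) with ⟨h2, _⟩ | ⟨h2, _⟩ <;> linarith [hξ.1, hξ.2], hT⟩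

lemma quad_bound (a b c : ℝ) (f : ℝ → ℝ) (hc : c ∈ Ioo a b)
    (hf : ContDiffOn ℝ (⊤ : ℕ∞) f (Icc a b)) (hd0 : deriv f c = 0)
    {ε : ℝ} (hε : 0 < ε) :
    ∃ δ > 0, Icc (c - δ) (c + δ) ⊆ Ioo a b ∧ ∀ x, |x - c| ≤ δ →
      |f x - f c - deriv (deriv f) c / 2 * (x - c) ^ 2| ≤ ε * (x - c) ^ 2 := by
  have hd1 : ContDiffOn ℝ (⊤ : ℕ∞) (deriv f) (Ioo a b) :=
    (hf.mono Ioo_subset_Icc_self).deriv_of_isOpen isOpen_Ioo (by simp)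
  have hd2 : ContDiffOn ℝ (⊤ : ℕ∞) (deriv (deriv f)) (Ioo a b) :=
    hd1.deriv_of_isOpen isOpen_Ioo (by simp)
  have hcont : ContinuousAt (deriv (deriv f)) c :=
    (hd2.contDiffAt (isOpen_Ioo.mem_nhds hc)).continuousAt
  obtain ⟨δ₁, hδ₁, hδ₁p⟩ := Metric.continuousAt_iff.mp hcont (2 * ε) (by linarith)
  set δ := min (δ₁ / 2) (min ((c - a) / 2) ((b - c) / 2)) with hδ
  have hδa : δ ≤ (c - a) / 2 := min_le_of_right_le (min_le_left _ _)
  have hδb : δ ≤ (b - c) / 2 := min_le_of_right_le (min_le_right _ _)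
  have hδ1 : δ ≤ δ₁ / 2 := min_le_left _ _
  refine ⟨δ, lt_min (by linarith) (lt_min (by linarith [hc.1]) (by linarith [hc.2])), ?_, ?_⟩
  · intro y hy
    have h1 := hy.1; have h2 := hy.2
    constructor <;> [linarith [hc.1]; linarith [hc.2]]
  · intro x hx
    have habs := abs_le.mp hx
    have hxmem : x ∈ Ioo a b := ⟨by linarith [hc.1, habs.1], by linarith [hc.2, habs.2]⟩
    obtain ⟨ξ, hξab, hξd, hT⟩ := taylor2 a b c f hc hf hd0 x hxmem
    have hξnear : dist ξ c < δ₁ := by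
      rw [Real.dist_eq]
      calc |ξ - c| ≤ |x - c| := hξd
        _ ≤ δ := hx
        _ ≤ δ₁ / 2 := hδ1
        _ < δ₁ := by linarith
    have hd2close := hδ₁p hξnear
    rw [Real.dist_eq] at hd2close
    have : f x - f c - deriv (deriv f) c / 2 * (x - c) ^ 2
        = (deriv (deriv f) ξ - deriv (deriv f) c) / 2 * (x - c) ^ 2 := by
      rw [hT]; ring
    rw [this, abs_mul, abs_div]
    have h1 : |deriv (deriv f) ξ - deriv (deriv f) c| / |(2:ℝ)| ≤ ε := by
      rw [abs_two]; linarith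
    have h2 : |(x - c) ^ 2| = (x - c) ^ 2 := abs_of_nonneg (sq_nonneg _)
    rw [h2]
    exact mul_le_mul_of_nonneg_right h1 (sq_nonneg _)

lemma tail_zero (η M : ℝ) (hη : 0 < η) (T : ℝ → ℝ)
    (hT : ∀ᶠ n in atTop, |T n| ≤ M * (n ^ ((1:ℝ)/2) * Real.exp (-η * n))) :
    Tendsto T atTop (𝓝 0) := by
  have hg : Tendsto (fun n : ℝ => M * (n ^ ((1:ℝ)/2) * Real.exp (-η * n))) atTop (𝓝 0) := by
    have := (tendsto_rpow_mul_exp_neg_mul_atTop_nhds_zero ((1:ℝ)/2) η hη).const_mul M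
    simpa using this
  have hg' : Tendsto (fun n : ℝ => -(M * (n ^ ((1:ℝ)/2) * Real.exp (-η * n)))) atTop (𝓝 0) := by
    simpa using hg.neg
  refine tendsto_of_tendsto_of_tendsto_of_le_of_le' hg' hg ?_ ?_
  · filter_upwards [hT] with n hn; linarith [(abs_le.mp hn).1]
  · filter_upwards [hT] with n hn; linarith [(abs_le.mp hn).2]

lemma sqrt_tendsto : Tendsto Real.sqrt atTop atTop := by
  refine (tendsto_rpow_atTop (by norm_num : (0:ℝ) < 1/2)).congr' ?_
  filter_upwards [eventually_ge_atTop (0:ℝ)] with n hn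
  rw [Real.sqrt_eq_rpow]

lemma key_exp (a b c : ℝ) (f : ℝ → ℝ) (hc : c ∈ Ioo a b)
    (hf : ContDiffOn ℝ (⊤ : ℕ∞) f (Icc a b)) (hd0 : deriv f c = 0) (t : ℝ) :
    Tendsto (fun n : ℝ => n * (f ((Real.sqrt n)⁻¹ * t + c) - f c)) atTop
      (𝓝 (deriv (deriv f) c / 2 * t ^ 2)) := by
  rcases eq_or_ne t 0 with rfl | ht
  · simpa using (tendsto_const_nhds : Tendsto (fun _ : ℝ => (0:ℝ)) atTop _)
  have ht2 : 0 < t ^ 2 := by positivity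
  rw [Metric.tendsto_nhds]
  intro ε hε
  obtain ⟨δ', hδ'pos, _, hbd⟩ := quad_bound a b c f hc hf hd0
    (ε := ε / (2 * t ^ 2)) (by positivity)
  filter_upwards [eventually_ge_atTop (1:ℝ), eventually_gt_atTop ((|t| / δ') ^ 2)]
    with n hn1 hn2
  have hnpos : (0:ℝ) < n := by linarith
  have hsn : 0 < Real.sqrt n := Real.sqrt_pos.mpr hnpos
  have hlt : |t| / δ' < Real.sqrt n := (Real.lt_sqrt (by positivity)).mpr hn2
  have hdist : |((Real.sqrt n)⁻¹ * t + c) - c| ≤ δ' := by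
    have h1 : |(Real.sqrt n)⁻¹ * t| = (Real.sqrt n)⁻¹ * |t| := by
      rw [abs_mul, abs_of_nonneg (by positivity : (0:ℝ) ≤ (Real.sqrt n)⁻¹)]
    have h2 : (Real.sqrt n)⁻¹ * |t| ≤ δ' := by
      rw [inv_mul_le_iff₀ hsn, mul_comm]
      rw [div_lt_iff₀ hδ'pos] at hlt
      linarith
    simpa [h1] using h2
  have hbd' := hbd _ hdist
  set x := (Real.sqrt n)⁻¹ * t + c with hx
  have hxc : x - c = (Real.sqrt n)⁻¹ * t := by rw [hx]; ring
  have hsq : (x - c) ^ 2 = t ^ 2 / n := by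
    rw [hxc, mul_pow, inv_pow, Real.sq_sqrt hnpos.le]
    ring
  rw [hsq] at hbd'
  have key : |n * (f x - f c) - deriv (deriv f) c / 2 * t ^ 2| ≤ ε / 2 := by
    have h3 := mul_le_mul_of_nonneg_left hbd' hnpos.le
    have h5 : n * (f x - f c - deriv (deriv f) c / 2 * (t ^ 2 / n))
        = n * (f x - f c) - deriv (deriv f) c / 2 * t ^ 2 := by
      field_simp
    have h4 : n * |f x - f c - deriv (deriv f) c / 2 * (t ^ 2 / n)|
        = |n * (f x - f c) - deriv (deriv f) c / 2 * t ^ 2| := by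
      rw [← h5, abs_mul, abs_of_nonneg hnpos.le]
    rw [h4] at h3
    calc |n * (f x - f c) - deriv (deriv f) c / 2 * t ^ 2|
        ≤ n * (ε / (2 * t ^ 2) * (t ^ 2 / n)) := h3
      _ = ε / 2 := by field_simp
  rw [Real.dist_eq]
  linarith
set_option maxHeartbeats 1000000 in
theorem stmt16 (a b c : ℝ) (f g : ℝ → ℝ) (hc : c ∈ Set.Ioo a b)
    (hf : ContDiffOn ℝ (⊤ : ℕ∞) f (Set.Icc a b)) (hg : ContDiffOn ℝ (⊤ : ℕ∞) g (Set.Icc a b))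
    (hmax : ∀ x ∈ Set.Icc a b, x ≠ c → f x < f c)
    (hf'' : iteratedDerivWithin 2 f (Set.Icc a b) c < 0) :
    Tendsto (fun n : ℝ =>
        n ^ ((1:ℝ)/2) * Real.exp (-n * f c) * ∫ x in a..b, g x * Real.exp (n * f x))
      atTop
      (nhds (g c * Real.sqrt (-(2 * π) / iteratedDerivWithin 2 f (Set.Icc a b) c))) := by
  have hab : a < b := hc.1.trans hc.2
  have hQ : iteratedDerivWithin 2 f (Set.Icc a b) c = deriv (deriv f) c :=
    iter2_eq f (Icc a b) (uniqueDiffOn_Icc hab) c (by rw [interior_Icc]; exact hc)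
  set Q : ℝ := deriv (deriv f) c with hQdef
  rw [hQ] at hf'' ⊢
  have hQneg : Q < 0 := hf''
  have hd0 : deriv f c = 0 := by
    have hloc : IsLocalMax f c := by
      filter_upwards [Icc_mem_nhds hc.1 hc.2] with y hy
      by_cases hyc : y = c
      · simp [hyc]
      · exact (hmax y hy hyc).le
    exact hloc.deriv_eq_zero
  -- bound for g
  obtain ⟨M0, hM0⟩ := isCompact_Icc.exists_bound_of_continuousOn hg.continuousOn
  set M : ℝ := max M0 0 with hM
  have hMnn : 0 ≤ M := le_max_right _ _
  have hgM : ∀ x ∈ Icc a b, |g x| ≤ M := fun x hx =>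
    le_trans (by simpa using hM0 x hx) (le_max_left _ _)
  -- δ
  obtain ⟨δ, hδpos, hδsub, hδbd⟩ := quad_bound a b c f hc hf hd0
    (ε := -Q / 4) (by linarith)
  have hub : ∀ x, |x - c| ≤ δ → f x - f c ≤ Q / 4 * (x - c) ^ 2 := by
    intro x hx
    have h1 := abs_le.mp (hδbd x hx)
    nlinarith [h1.1, h1.2]
  have hsubIcc : Icc (c - δ) (c + δ) ⊆ Icc a b := hδsub.trans Ioo_subset_Icc_self
  have hacδ : a < c - δ := (hδsub ⟨le_refl _, by linarith⟩).1
  have hcδb : c + δ < b := (hδsub ⟨by linarith, le_refl _⟩).2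
  -- tail sup
  set K : Set ℝ := Icc a b ∩ {x | δ ≤ |x - c|} with hK
  have hKc : IsCompact K := isCompact_Icc.inter_right
    (isClosed_le continuous_const (continuous_id.sub continuous_const).abs)
  have haK : a ∈ K := by
    refine ⟨left_mem_Icc.mpr hab.le, ?_⟩
    show δ ≤ |a - c|
    rw [abs_sub_comm, abs_of_nonneg (by linarith [hc.1] : (0:ℝ) ≤ c - a)]
    linarith
  obtain ⟨x₀, hx₀K, hx₀max⟩ := hKc.exists_isMaxOn ⟨a, haK⟩
    (hf.continuousOn.mono inter_subset_left)
  set η : ℝ := f c - f x₀ with hη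
  have hηpos : 0 < η := by
    have hx₀ne : x₀ ≠ c := by
      intro h
      have := hx₀K.2
      rw [h] at this
      simp at this
      linarith
    have := hmax x₀ hx₀K.1 hx₀ne
    simp only [hη]; linarith
  have hK_le : ∀ x ∈ K, f x ≤ f c - η := fun x hx => by
    have h2 : f x ≤ f x₀ := hx₀max hx
    simp only [hη]; linarith
  -- integrability
  have hcont : ∀ n : ℝ, ContinuousOn (fun x => g x * Real.exp (n * f x)) (Icc a b) :=
    fun n => hg.continuousOn.mul
      (Real.continuous_exp.comp_continuousOn (continuousOn_const.mul hf.continuousOn))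
  have hint : ∀ n : ℝ, ∀ u v : ℝ, u ∈ Icc a b → v ∈ Icc a b → u ≤ v →
      IntervalIntegrable (fun x => g x * Real.exp (n * f x)) volume u v := by
    intro n u v hu hv huv
    exact ((hcont n).mono (by rw [uIcc_of_le huv]; exact Icc_subset_Icc hu.1 hv.2)).intervalIntegrable
  set T1 : ℝ → ℝ := fun n => n ^ ((1:ℝ)/2) * Real.exp (-n * f c) *
    ∫ x in a..(c - δ), g x * Real.exp (n * f x) with hT1def
  set T2 : ℝ → ℝ := fun n => n ^ ((1:ℝ)/2) * Real.exp (-n * f c) *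
    ∫ x in (c + δ)..b, g x * Real.exp (n * f x) with hT2def
  set Mn : ℝ → ℝ := fun n => n ^ ((1:ℝ)/2) * Real.exp (-n * f c) *
    ∫ x in (c - δ)..(c + δ), g x * Real.exp (n * f x) with hMndef
  have hsplit : ∀ n : ℝ, n ^ ((1:ℝ)/2) * Real.exp (-n * f c) *
      (∫ x in a..b, g x * Real.exp (n * f x)) = T1 n + Mn n + T2 n := by
    intro n
    have e1 : (∫ x in (c-δ)..(c+δ), g x * Real.exp (n * f x))
        + (∫ x in (c+δ)..b, g x * Real.exp (n * f x))
        = ∫ x in (c-δ)..b, g x * Real.exp (n * f x) :=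
      integral_add_adjacent_intervals
        (hint n _ _ ⟨by linarith, by linarith⟩ ⟨by linarith, by linarith⟩ (by linarith))
        (hint n _ _ ⟨by linarith, by linarith⟩ (right_mem_Icc.mpr hab.le) hcδb.le)
    have e2 : (∫ x in a..(c-δ), g x * Real.exp (n * f x))
        + (∫ x in (c-δ)..b, g x * Real.exp (n * f x))
        = ∫ x in a..b, g x * Real.exp (n * f x) :=
      integral_add_adjacent_intervals
        (hint n _ _ (left_mem_Icc.mpr hab.le) ⟨by linarith, by linarith⟩ (by linarith))
        (hint n _ _ ⟨by linarith, by linarith⟩ (right_mem_Icc.mpr hab.le) (by linarith))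
    simp only [hT1def, hMndef, hT2def]
    rw [← e2, ← e1]
    ring
  -- tails
  have htail : ∀ u v : ℝ, u ≤ v → (∀ x ∈ Set.Ioc u v, x ∈ K) → ∀ n : ℝ, 0 ≤ n →
      |n ^ ((1:ℝ)/2) * Real.exp (-n * f c) * ∫ x in u..v, g x * Real.exp (n * f x)|
        ≤ M * |v - u| * (n ^ ((1:ℝ)/2) * Real.exp (-η * n)) := by
    intro u v huv hKsub n hn
    have hC : ∀ x ∈ Set.uIoc u v, ‖g x * Real.exp (n * f x)‖ ≤ M * Real.exp (n * (f c - η)) := by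
      intro x hx
      rw [uIoc_of_le huv] at hx
      have hxK := hKsub x hx
      have hfx : f x ≤ f c - η := hK_le x hxK
      have h1 : |g x| ≤ M := hgM x hxK.1
      rw [norm_mul, Real.norm_eq_abs, Real.norm_eq_abs, Real.abs_exp]
      exact mul_le_mul h1 (Real.exp_le_exp.mpr (mul_le_mul_of_nonneg_left hfx hn))
        (Real.exp_pos _).le hMnn
    have h2 := intervalIntegral.norm_integral_le_of_norm_le_const hC
    rw [Real.norm_eq_abs] at h2
    have hrnn : 0 ≤ n ^ ((1:ℝ)/2) := Real.rpow_nonneg hn _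
    rw [abs_mul, abs_mul, abs_of_nonneg hrnn, abs_of_nonneg (Real.exp_pos (-n * f c)).le]
    have hexp : Real.exp (-n * f c) * Real.exp (n * (f c - η)) = Real.exp (-η * n) := by
      rw [← Real.exp_add]; congr 1; ring
    calc n ^ ((1:ℝ)/2) * Real.exp (-n * f c) * |∫ x in u..v, g x * Real.exp (n * f x)|
        ≤ n ^ ((1:ℝ)/2) * Real.exp (-n * f c) * (M * Real.exp (n * (f c - η)) * |v - u|) := by
          refine mul_le_mul_of_nonneg_left h2 (by positivity)
      _ = M * |v - u| * (n ^ ((1:ℝ)/2) * Real.exp (-η * n)) := by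
          rw [← hexp]; ring
  have hT1tend : Tendsto T1 atTop (𝓝 0) := by
    refine tail_zero η (M * |c - δ - a|) hηpos T1 ?_
    filter_upwards [eventually_ge_atTop (0:ℝ)] with n hn
    exact htail a (c - δ) (by linarith) (fun x hx => ⟨⟨hx.1.le, by linarith [hx.2]⟩, by
      show δ ≤ |x - c|
      rw [abs_sub_comm, abs_of_nonneg (by linarith [hx.2] : (0:ℝ) ≤ c - x)]
      linarith [hx.2]⟩) n hn
  have hT2tend : Tendsto T2 atTop (𝓝 0) := by
    refine tail_zero η (M * |b - (c + δ)|) hηpos T2 ?_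
    filter_upwards [eventually_ge_atTop (0:ℝ)] with n hn
    exact htail (c + δ) b (by linarith) (fun x hx => ⟨⟨by linarith [hx.1], hx.2⟩, by
      show δ ≤ |x - c|
      rw [abs_of_nonneg (by linarith [hx.1] : (0:ℝ) ≤ x - c)]
      linarith [hx.1]⟩) n hn
  -- main part
  have hMntend : Tendsto Mn atTop (𝓝 (g c * Real.sqrt (-(2 * π) / Q))) := by
    set sn : ℝ → ℝ := fun n => (Real.sqrt n)⁻¹ with hsdef
    set inn : ℝ → ℝ → ℝ := fun n t =>
      g (sn n * t + c) * Real.exp (n * (f (sn n * t + c) - f c)) with hinndef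
    set F : ℝ → ℝ → ℝ := fun n t =>
      (Set.Ioc (-(δ * Real.sqrt n)) (δ * Real.sqrt n)).indicator (inn n) t with hFdef
    have hsnpos : ∀ n : ℝ, 1 ≤ n → 0 < Real.sqrt n :=
      fun n hn => Real.sqrt_pos.mpr (by linarith)
    have hpt : ∀ n : ℝ, 1 ≤ n → sn n * (δ * Real.sqrt n) = δ := by
      intro n hn
      have := (hsnpos n hn).ne'
      simp only [hsdef]
      field_simp
    have hmem : ∀ n : ℝ, 1 ≤ n → ∀ t ∈ Set.Ioc (-(δ * Real.sqrt n)) (δ * Real.sqrt n),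
        sn n * t + c ∈ Icc (c - δ) (c + δ) := by
      intro n hn t ht
      have h0 : 0 < Real.sqrt n := hsnpos n hn
      have h1 : |t| ≤ δ * Real.sqrt n := abs_le.mpr ⟨by linarith [ht.1], ht.2⟩
      have h2 : |sn n * t| ≤ δ := by
        rw [abs_mul, abs_of_nonneg (by positivity : (0:ℝ) ≤ sn n)]
        calc sn n * |t| ≤ sn n * (δ * Real.sqrt n) :=
              mul_le_mul_of_nonneg_left h1 (by positivity)
          _ = δ := hpt n hn
      have h3 := abs_le.mp h2
      constructor <;> [linarith [h3.1]; linarith [h3.2]]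
    have hxc : ∀ n : ℝ, 1 ≤ n → ∀ t : ℝ, n * (sn n * t + c - c) ^ 2 = t ^ 2 := by
      intro n hn t
      have h0 : (0:ℝ) < n := by linarith
      have : sn n * t + c - c = sn n * t := by ring
      rw [this, mul_pow, hsdef]
      simp only
      rw [inv_pow, Real.sq_sqrt h0.le]
      field_simp
    have hDCT : Tendsto (fun n => ∫ t, F n t) atTop
        (𝓝 (∫ t, g c * Real.exp (Q / 2 * t ^ 2))) := by
      refine MeasureTheory.tendsto_integral_filter_of_dominated_convergence
        (bound := fun t => M * Real.exp (Q / 4 * t ^ 2)) ?_ ?_ ?_ ?_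
      · filter_upwards [eventually_ge_atTop (1:ℝ)] with n hn
        rw [hFdef]
        simp only
        rw [aestronglyMeasurable_indicator_iff measurableSet_Ioc]
        have haff : ContinuousOn (fun t : ℝ => sn n * t + c)
            (Set.Ioc (-(δ * Real.sqrt n)) (δ * Real.sqrt n)) :=
          ((continuous_const.mul continuous_id).add continuous_const).continuousOn
        have hmaps : MapsTo (fun t : ℝ => sn n * t + c)
            (Set.Ioc (-(δ * Real.sqrt n)) (δ * Real.sqrt n)) (Icc a b) :=
          fun t ht => hsubIcc (hmem n hn t ht)
        exact (((hg.continuousOn.comp haff hmaps).mul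
          (Real.continuous_exp.comp_continuousOn (continuousOn_const.mul
            ((hf.continuousOn.comp haff hmaps).sub continuousOn_const)))).aestronglyMeasurable
          measurableSet_Ioc)
      · filter_upwards [eventually_ge_atTop (1:ℝ)] with n hn
        refine Eventually.of_forall fun t => ?_
        by_cases ht : t ∈ Set.Ioc (-(δ * Real.sqrt n)) (δ * Real.sqrt n)
        · rw [hFdef]
          simp only [indicator_of_mem ht]
          set x := sn n * t + c with hxdef
          have hxIcc : x ∈ Icc (c - δ) (c + δ) := hmem n hn t ht
          have hxab : x ∈ Icc a b := hsubIcc hxIcc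
          have hxd : |x - c| ≤ δ := by
            rw [abs_le]; constructor <;> [linarith [hxIcc.1]; linarith [hxIcc.2]]
          have hexp : n * (f x - f c) ≤ Q / 4 * t ^ 2 := by
            have h1 := hub x hxd
            have h2 := mul_le_mul_of_nonneg_left h1 (by linarith : (0:ℝ) ≤ n)
            calc n * (f x - f c) ≤ n * (Q / 4 * (x - c) ^ 2) := h2
              _ = Q / 4 * (n * (x - c) ^ 2) := by ring
              _ = Q / 4 * t ^ 2 := by rw [hxdef, hxc n hn t]
          rw [norm_mul, Real.norm_eq_abs, Real.norm_eq_abs, Real.abs_exp]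
          exact mul_le_mul (hgM x hxab) (Real.exp_le_exp.mpr hexp)
            (Real.exp_pos _).le hMnn
        · rw [hFdef]
          simp only [indicator_of_notMem ht]
          have : (0:ℝ) ≤ M * Real.exp (Q / 4 * t ^ 2) := by positivity
          simpa using this
      · have h1 : Integrable (fun t : ℝ => M * Real.exp (-(-(Q/4)) * t ^ 2)) volume :=
          (integrable_exp_neg_mul_sq (by linarith : (0:ℝ) < -(Q/4))).const_mul M
        simpa using h1
      · refine Eventually.of_forall fun t => ?_
        have hev : ∀ᶠ n in atTop, F n t = inn n t := by
          filter_upwards [eventually_ge_atTop (1:ℝ),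
            eventually_gt_atTop ((|t| / δ) ^ 2)] with n hn1 hn2
          have h0 : 0 < Real.sqrt n := hsnpos n hn1
          have hlt : |t| / δ < Real.sqrt n := (Real.lt_sqrt (by positivity)).mpr hn2
          have h1 : |t| < δ * Real.sqrt n := by
            rw [div_lt_iff₀ hδpos] at hlt; linarith
          have h2 := abs_lt.mp h1
          exact Set.indicator_of_mem
            (show t ∈ Set.Ioc (-(δ * Real.sqrt n)) (δ * Real.sqrt n) from
              ⟨by linarith [h2.1], by linarith [h2.2]⟩) (inn n)
        have hs0 : Tendsto sn atTop (𝓝 0) := tendsto_inv_atTop_zero.comp sqrt_tendsto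
        have haff : Tendsto (fun n => sn n * t + c) atTop (𝓝 c) := by
          have := (hs0.mul_const t).add_const c
          simpa using this
        have h1 : Tendsto (fun n => g (sn n * t + c)) atTop (𝓝 (g c)) :=
          ((hg.continuousOn.continuousAt (Icc_mem_nhds hc.1 hc.2)).tendsto).comp haff
        have h2 : Tendsto (fun n => Real.exp (n * (f (sn n * t + c) - f c))) atTop
            (𝓝 (Real.exp (Q / 2 * t ^ 2))) :=
          (Real.continuous_exp.continuousAt.tendsto).comp (key_exp a b c f hc hf hd0 t)
        exact ((h1.mul h2).congr' (hev.mono fun n h => h.symm))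
    have hvalue : (∫ t : ℝ, g c * Real.exp (Q / 2 * t ^ 2)) = g c * Real.sqrt (-(2 * π) / Q) := by
      rw [MeasureTheory.integral_const_mul]
      congr 1
      have hrw : (fun t : ℝ => Real.exp (Q / 2 * t ^ 2))
          = fun t : ℝ => Real.exp (-(-(Q/2)) * t ^ 2) := by
        funext t; rw [neg_neg]
      rw [hrw, integral_gaussian]
      congr 1
      have hQne : Q ≠ 0 := ne_of_lt hQneg
      field_simp
    have hEq : ∀ᶠ n in atTop, (∫ t, F n t) = Mn n := by
      filter_upwards [eventually_ge_atTop (1:ℝ)] with n hn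
      have h0 : 0 < Real.sqrt n := hsnpos n hn
      have hne : sn n ≠ 0 := by positivity
      have step1 : (∫ t, F n t) = ∫ t in Set.Ioc (-(δ * Real.sqrt n)) (δ * Real.sqrt n), inn n t :=
        MeasureTheory.integral_indicator measurableSet_Ioc
      have step2 : (∫ t in Set.Ioc (-(δ * Real.sqrt n)) (δ * Real.sqrt n), inn n t)
          = ∫ t in (-(δ * Real.sqrt n))..(δ * Real.sqrt n), inn n t :=
        (intervalIntegral.integral_of_le (by nlinarith [hδpos.le, h0.le] :
          -(δ * Real.sqrt n) ≤ δ * Real.sqrt n)).symm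
      have step3 := intervalIntegral.integral_comp_mul_add
        (a := -(δ * Real.sqrt n)) (b := δ * Real.sqrt n)
        (f := fun x => g x * Real.exp (n * (f x - f c))) (c := sn n) hne c
      have hend1 : sn n * -(δ * Real.sqrt n) + c = c - δ := by
        have := hpt n hn; rw [mul_neg, this]; ring
      have hend2 : sn n * (δ * Real.sqrt n) + c = c + δ := by
        rw [hpt n hn]; ring
      rw [hend1, hend2] at step3
      have step4 : (∫ x in (c - δ)..(c + δ), g x * Real.exp (n * (f x - f c)))
          = Real.exp (-n * f c) * ∫ x in (c - δ)..(c + δ), g x * Real.exp (n * f x) := by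
        rw [← intervalIntegral.integral_const_mul]
        congr 1
        funext x
        have : Real.exp (n * (f x - f c)) = Real.exp (-n * f c) * Real.exp (n * f x) := by
          rw [← Real.exp_add]; congr 1; ring
        rw [this]; ring
      have hrpow : (n : ℝ) ^ ((1:ℝ)/2) = Real.sqrt n := (Real.sqrt_eq_rpow n).symm
      rw [step1, step2]
      calc (∫ t in (-(δ * Real.sqrt n))..(δ * Real.sqrt n), inn n t)
          = (sn n)⁻¹ • ∫ x in (c - δ)..(c + δ), g x * Real.exp (n * (f x - f c)) := step3
        _ = Real.sqrt n * ∫ x in (c - δ)..(c + δ), g x * Real.exp (n * (f x - f c)) := by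
            rw [smul_eq_mul, hsdef]; simp
        _ = Mn n := by
            rw [step4, hMndef]
            simp only [hrpow]
            ring
    rw [hvalue] at hDCT
    exact hDCT.congr' hEq
  have := (hT1tend.add hMntend).add hT2tend
  rw [zero_add, add_zero] at this
  exact (tendsto_congr hsplit).mpr this
end

section
/- (Airy function right-tail asymptotics) As x → +∞, Ai(x) ~ e^{−(2/3)x^{3/2}} / (2√π x^{1/4}), i.e. the ratio Ai(x) · 2√π x^{1/4} e^{(2/3)x^{3/2}} tends to 1. -/
/-!
Write `x = a²` with `a > 0`. The entire function `F(z) = exp(i(z³/3 + a²z))` has real part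
`cos(t³/3 + a²t)` on the real axis, and `z = ia` is a saddle point of its phase: on the line
`Im z = a` one has `F(t + ia) = exp(-2a³/3) exp(-at²) exp(it³/3)`, which is integrable, while on a
vertical segment `u + is`, `0 < s ≤ a`, `|F|` decays like `exp(-u²s)`. Cauchy's theorem on
rectangles therefore moves the integral to the line through the saddle:
`2π Ai(a²) = exp(-2a³/3) ∫ exp(-at²) cos(t³/3) dt`.
With `b = √a = x^{1/4}` and `t = v/b` the right-hand side becomes
`exp(-2x^{3/2}/3) b⁻¹ ∫ exp(-v²) cos(b⁻³v³/3) dv`, and by dominated convergence the last integral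
tends to `∫ exp(-v²) dv = √π` as `b → ∞`.
-/

open Real Filter MeasureTheory Topology
open Complex (I)

theorem tendsto_integral_symm_of_contour_shift {f : ℂ → ℂ} (hf : Differentiable ℂ f) {a : ℝ}
    (hline : Integrable fun t : ℝ => f (t + a * I))
    (hside : Tendsto (fun u : ℝ => ∫ s in (0:ℝ)..a, f (u + s * I)) (cocompact ℝ) (𝓝 0)) :
    Tendsto (fun R : ℝ => ∫ t in -R..R, f t) atTop (𝓝 (∫ t : ℝ, f (t + a * I))) := by
  have hrect (R : ℝ) : ∫ t in -R..R, f t = (∫ t in -R..R, f (t + a * I))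
      - I • (∫ s in (0:ℝ)..a, f (R + s * I))
      + I • (∫ s in (0:ℝ)..a, f (-R + s * I)) := by
    have := Complex.integral_boundary_rect_eq_zero_of_differentiableOn f (-R)
      (R + a * I) hf.differentiableOn
    simp only [Complex.neg_im, Complex.ofReal_im, neg_zero, Complex.ofReal_zero, zero_mul,
      add_zero, Complex.neg_re, Complex.ofReal_re, Complex.add_re, Complex.mul_re, Complex.I_re,
      mul_zero, Complex.I_im, mul_one, sub_self, Complex.add_im, Complex.mul_im, zero_add,
      smul_eq_mul, Complex.ofReal_neg] at this
    linear_combination this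
  simp_rw [hrect]
  simpa using ((intervalIntegral_tendsto_integral hline tendsto_neg_atTop_atBot tendsto_id).sub
    ((hside.comp atTop_le_cocompact).const_smul I)).add
    ((hside.comp (tendsto_neg_atTop_atBot.mono_right atBot_le_cocompact)).const_smul I)

theorem integral_symm_eq_two_mul_of_even {f : ℝ → ℝ} (hf : Continuous f) (heven : ∀ t, f (-t) = f t)
    (R : ℝ) : ∫ t in -R..R, f t = 2 * ∫ t in (0:ℝ)..R, f t := by
  rw [← intervalIntegral.integral_add_adjacent_intervals (hf.intervalIntegrable _ 0)
    (hf.intervalIntegrable 0 _), two_mul]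
  congr 1
  simpa [heven] using (intervalIntegral.integral_comp_neg (a := 0) (b := R) f).symm

noncomputable def airyKernel (x : ℝ) (z : ℂ) : ℂ := Complex.exp (I * (z ^ 3 / 3 + x * z))

theorem differentiable_airyKernel (x : ℝ) : Differentiable ℂ (airyKernel x) := by
  unfold airyKernel; fun_prop

theorem airyKernel_add_mul_I (x u s : ℝ) : airyKernel x (u + s * I) =
    exp (-(u ^ 2 * s) + s ^ 3 / 3 - x * s)
      * Complex.exp ((u ^ 3 / 3 - u * s ^ 2 + x * u : ℝ) * I) := by
  rw [airyKernel, Complex.ofReal_exp, ← Complex.exp_add]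
  congr 1
  apply Complex.ext <;> simp [pow_succ] <;> ring

theorem norm_airyKernel (x u s : ℝ) :
    ‖airyKernel x (u + s * I)‖ = exp (-(u ^ 2 * s) + s ^ 3 / 3 - x * s) := by
  rw [airyKernel_add_mul_I, norm_mul, Complex.norm_exp_ofReal_mul_I, mul_one, Complex.norm_real,
    Real.norm_of_nonneg (Real.exp_pos _).le]

theorem re_airyKernel (x u s : ℝ) :
    (airyKernel x (u + s * I)).re
      = exp (-(u ^ 2 * s) + s ^ 3 / 3 - x * s) * cos (u ^ 3 / 3 - u * s ^ 2 + x * u) := by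
  rw [airyKernel_add_mul_I, Complex.re_ofReal_mul, Complex.exp_ofReal_mul_I_re]

theorem re_airyKernel_ofReal (x t : ℝ) : (airyKernel x t).re = cos (t ^ 3 / 3 + x * t) := by
  simpa using re_airyKernel x t 0

theorem re_airyKernel_saddle (a t : ℝ) : (airyKernel (a ^ 2) (t + a * I)).re
    = exp (-(2 * a ^ 3 / 3)) * (exp (-(a * t ^ 2)) * cos (t ^ 3 / 3)) := by
  rw [re_airyKernel, ← mul_assoc, ← Real.exp_add]
  ring_nf

theorem integrable_airyKernel_saddle {a : ℝ} (ha : 0 < a) :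
    Integrable fun t : ℝ => airyKernel (a ^ 2) (t + a * I) := by
  refine ((integrable_exp_neg_mul_sq ha).const_mul (exp (-(2 * a ^ 3 / 3)))).mono'
    ((differentiable_airyKernel _).continuous.comp (by fun_prop)).aestronglyMeasurable
    (.of_forall fun t => (norm_airyKernel _ _ _).trans_le (le_of_eq ?_))
  rw [← Real.exp_add]
  ring_nf

theorem tendsto_integral_airyKernel_vertical (x : ℝ) {a : ℝ} (ha : 0 ≤ a) :
    Tendsto (fun u : ℝ => ∫ s in (0:ℝ)..a, airyKernel x (u + s * I)) (cocompact ℝ) (𝓝 0) := by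
  rw [cocompact_eq_atBot_atTop, ← comap_abs_atTop, show (0 : ℂ) = ∫ _ in (0:ℝ)..a, (0 : ℂ) by simp]
  apply intervalIntegral.tendsto_integral_filter_of_dominated_convergence
    (fun _ => exp (a ^ 3 / 3 + |x| * a))
  · exact .of_forall fun u =>
      ((differentiable_airyKernel x).continuous.comp (by fun_prop)).aestronglyMeasurable
  · refine .of_forall fun u => .of_forall fun s hs => ?_
    rw [Set.uIoc_of_le ha] at hs
    rw [norm_airyKernel, Real.exp_le_exp]
    have := pow_le_pow_left₀ hs.1.le hs.2 3
    nlinarith [mul_nonneg (sq_nonneg u) hs.1.le, mul_le_mul_of_nonneg_right (neg_le_abs x) hs.1.le,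
      mul_le_mul_of_nonneg_left hs.2 (abs_nonneg x)]
  · exact intervalIntegrable_const
  · refine .of_forall fun s hs => ?_
    rw [Set.uIoc_of_le ha] at hs
    rw [tendsto_zero_iff_norm_tendsto_zero]
    simp_rw [norm_airyKernel]
    have hsq : Tendsto (fun u : ℝ => u ^ 2) (comap abs atTop) atTop :=
      ((tendsto_pow_atTop two_ne_zero).comp tendsto_comap).congr fun u => sq_abs u
    exact tendsto_exp_atBot.comp <| tendsto_atBot_add_const_right _ _ <|
      tendsto_atBot_add_const_right _ _ <| tendsto_neg_atTop_atBot.comp <| hsq.atTop_mul_const hs.1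

theorem tendsto_integral_cos_cubic {a : ℝ} (ha : 0 < a) :
    Tendsto (fun R : ℝ => ∫ t in (0:ℝ)..R, cos (t ^ 3 / 3 + a ^ 2 * t)) atTop
      (𝓝 (exp (-(2 * a ^ 3 / 3)) / 2 * ∫ t, exp (-(a * t ^ 2)) * cos (t ^ 3 / 3))) := by
  have hshift := (Complex.continuous_re.tendsto _).comp <|
    tendsto_integral_symm_of_contour_shift (differentiable_airyKernel (a ^ 2))
      (integrable_airyKernel_saddle ha) (tendsto_integral_airyKernel_vertical _ ha.le)
  have hcont : Continuous fun t : ℝ => cos (t ^ 3 / 3 + a ^ 2 * t) := by fun_prop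
  have hsymm (R : ℝ) : (∫ t in -R..R, airyKernel (a ^ 2) t).re
      = 2 * ∫ t in (0:ℝ)..R, cos (t ^ 3 / 3 + a ^ 2 * t) := by
    have hint : Continuous fun t : ℝ => airyKernel (a ^ 2) t :=
      (differentiable_airyKernel _).continuous.comp' Complex.continuous_ofReal
    rw [← integral_symm_eq_two_mul_of_even hcont (fun t => by rw [← Real.cos_neg]; ring_nf),
      ← RCLike.re_to_complex, ← intervalIntegral.intervalIntegral_re (hint.intervalIntegrable _ _)]
    simp_rw [RCLike.re_to_complex, re_airyKernel_ofReal]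
  have hline : (∫ t : ℝ, airyKernel (a ^ 2) (t + a * I)).re
      = exp (-(2 * a ^ 3 / 3)) * ∫ t, exp (-(a * t ^ 2)) * cos (t ^ 3 / 3) := by
    rw [← RCLike.re_to_complex, ← integral_re (integrable_airyKernel_saddle ha),
      ← integral_const_mul]
    simp_rw [RCLike.re_to_complex, re_airyKernel_saddle]
  rw [hline] at hshift
  simpa [Function.comp_def, hsymm, mul_div_right_comm] using hshift.div_const 2

noncomputable def gaussianCubicCos (c : ℝ) : ℝ := ∫ v, exp (-v ^ 2) * cos (c * v ^ 3 / 3)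

theorem continuous_gaussianCubicCos : Continuous gaussianCubicCos := by
  refine continuous_of_dominated (bound := fun v => exp (-v ^ 2))
    (fun c => (by fun_prop : Continuous _).aestronglyMeasurable) (fun c => .of_forall fun v => ?_)
    (by simpa using integrable_exp_neg_mul_sq one_pos) (.of_forall fun v => by fun_prop)
  rw [norm_mul, Real.norm_of_nonneg (Real.exp_pos _).le]
  exact mul_le_of_le_one_right (Real.exp_pos _).le (Real.abs_cos_le_one _)

theorem gaussianCubicCos_zero : gaussianCubicCos 0 = √π := by
  simpa [gaussianCubicCos] using integral_gaussian 1

theorem integral_exp_neg_sq_mul_cos_cubic {b : ℝ} (hb : 0 < b) :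
    ∫ t, exp (-(b ^ 2 * t ^ 2)) * cos (t ^ 3 / 3) = b⁻¹ * gaussianCubicCos (b ^ 3)⁻¹ := by
  have h := Measure.integral_comp_mul_left
    (fun v => exp (-v ^ 2) * cos ((b ^ 3)⁻¹ * v ^ 3 / 3)) b
  rw [abs_of_pos (inv_pos.2 hb), smul_eq_mul] at h
  rw [gaussianCubicCos, ← h]
  congr 1 with t
  field_simp

theorem airy_mul_eq_gaussianCubicCos {b A : ℝ} (hb : 0 < b)
    (hA : Tendsto (fun R : ℝ => (1 / π) * ∫ t in (0:ℝ)..R, cos (t ^ 3 / 3 + b ^ 4 * t))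
      atTop (𝓝 A)) :
    A * (2 * √π * b) * exp (2 / 3 * b ^ 6) = gaussianCubicCos (b ^ 3)⁻¹ / √π := by
  have h := (tendsto_integral_cos_cubic (pow_pos hb 2)).const_mul (1 / π)
  rw [← pow_mul, ← pow_mul, integral_exp_neg_sq_mul_cos_cubic hb] at h
  rw [tendsto_nhds_unique hA h]
  have hexp : exp (-(2 * b ^ 6 / 3)) * exp (2 * b ^ 6 / 3) = 1 := by
    rw [← Real.exp_add, neg_add_cancel, Real.exp_zero]
  have : 0 < √π := by positivity
  field_simp
  rw [Real.sq_sqrt pi_pos.le]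
  linear_combination π * gaussianCubicCos (1 / b ^ 3) * hexp

/-- Right-tail asymptotics of the Airy function, where `Ai` is characterized as the
value of the conditionally convergent oscillatory integral
`Ai(x) = (1/π) lim_{R→∞} ∫_0^R cos(t³/3 + x t) dt`. -/
theorem stmt19 (Ai : ℝ → ℝ)
    (hAi : ∀ x : ℝ, Tendsto (fun R : ℝ => (1 / π) * ∫ t in (0:ℝ)..R, Real.cos (t ^ 3 / 3 + x * t))
      atTop (nhds (Ai x))) :
    Tendsto (fun x : ℝ =>
        Ai x * (2 * Real.sqrt π * x ^ ((1:ℝ)/4)) * Real.exp (2/3 * x ^ ((3:ℝ)/2)))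
      atTop (nhds 1) := by
  have hlim : Tendsto (fun b : ℝ => gaussianCubicCos (b ^ 3)⁻¹ / √π) atTop (𝓝 1) := by
    have := ((continuous_gaussianCubicCos.tendsto 0).comp
      (tendsto_inv_atTop_zero.comp (tendsto_pow_atTop three_ne_zero))).div_const √π
    rwa [gaussianCubicCos_zero, div_self (by positivity)] at this
  refine (hlim.comp (tendsto_rpow_atTop (by norm_num : (0:ℝ) < 1 / 4))).congr' ?_
  filter_upwards [eventually_gt_atTop 0] with x hx
  have hpow (n : ℕ) : (x ^ ((1:ℝ) / 4)) ^ n = x ^ ((n : ℝ) / 4) := by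
    rw [← Real.rpow_natCast, ← Real.rpow_mul hx.le]; ring_nf
  have h := airy_mul_eq_gaussianCubicCos (A := Ai x) (by positivity : 0 < x ^ ((1:ℝ) / 4))
    (by rw [hpow 4, show ((4 : ℕ) : ℝ) / 4 = 1 by norm_num, Real.rpow_one]; exact hAi x)
  rw [hpow 6, show ((6 : ℕ) : ℝ) / 4 = 3 / 2 by norm_num] at h
  exact h.symm
end
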